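/- arXiv:2511.08534 — 3 statements merged into one kernel-verified Lean document; each statement's English description precedes it below -/
import Mathlib

section
/- Let N be a positive integer and b ∈ ℂ^N. Then there exists φ ∈ {−1,1}^N such that |Σ_{n=1}^N b_n φ_n|² ≥ (1/4) · sup{ |Σ_{n=1}^N b_n ψ_n|² : ψ ∈ ℂ^N, |ψ_n| = 1 for all n }. That is, regardless of the structure of b, a 1-bit (±1) configuration attains at least a quarter of the squared maximum achievable with continuous unit-modulus phase shifts, the latter maximum being (Σ_n |b_n|)². -/
/-!
Every unit-modulus configuration gives at most `(∑ ‖bₙ‖)²`, by the triangle inequality.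
Choosing `φₙ` as the sign of `Re bₙ` makes the real part of `∑ bₙ φₙ` equal to `∑ |Re bₙ|`,
and likewise for the imaginary parts; since `‖bₙ‖ ≤ |Re bₙ| + |Im bₙ|`, the better of these two
sign patterns reaches at least half of `∑ ‖bₙ‖`.
-/

namespace Complex

variable {ι : Type*} [Fintype ι]

theorem norm_sum_mul_le_sum_norm_of_norm_eq_one (b ψ : ι → ℂ) (hψ : ∀ i, ‖ψ i‖ = 1) :
    ‖∑ i, b i * ψ i‖ ≤ ∑ i, ‖b i‖ :=
  (norm_sum_le _ _).trans_eq <| by simp only [norm_mul, hψ, mul_one]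

theorem exists_sign_sum_abs_re_le_norm (b : ι → ℂ) :
    ∃ φ : ι → ℂ, (∀ i, φ i = 1 ∨ φ i = -1) ∧ ∑ i, |(b i).re| ≤ ‖∑ i, b i * φ i‖ := by
  classical
  refine ⟨fun i => if 0 ≤ (b i).re then 1 else -1, fun i => by dsimp only; split_ifs <;> simp, ?_⟩
  have hre : (∑ i, b i * if 0 ≤ (b i).re then 1 else -1).re = ∑ i, |(b i).re| := by
    rw [re_sum]
    refine Finset.sum_congr rfl fun i _ => ?_
    split_ifs with h
    · simp [abs_of_nonneg h]
    · simp [abs_of_neg (not_le.mp h)]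
  exact hre ▸ re_le_norm _

theorem exists_sign_sum_abs_im_le_norm (b : ι → ℂ) :
    ∃ φ : ι → ℂ, (∀ i, φ i = 1 ∨ φ i = -1) ∧ ∑ i, |(b i).im| ≤ ‖∑ i, b i * φ i‖ := by
  obtain ⟨φ, hφ, hle⟩ := exists_sign_sum_abs_re_le_norm fun i => -I * b i
  refine ⟨φ, hφ, ?_⟩
  simpa [mul_assoc, ← Finset.mul_sum] using hle

theorem exists_sign_sum_norm_le_two_mul_norm (b : ι → ℂ) :
    ∃ φ : ι → ℂ, (∀ i, φ i = 1 ∨ φ i = -1) ∧ ∑ i, ‖b i‖ ≤ 2 * ‖∑ i, b i * φ i‖ := by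
  have hsplit : ∑ i, ‖b i‖ ≤ ∑ i, |(b i).re| + ∑ i, |(b i).im| := by
    rw [← Finset.sum_add_distrib]
    exact Finset.sum_le_sum fun i _ => norm_le_abs_re_add_abs_im _
  obtain ⟨φ, hφ, hre⟩ := exists_sign_sum_abs_re_le_norm b
  obtain ⟨χ, hχ, him⟩ := exists_sign_sum_abs_im_le_norm b
  rcases le_total (∑ i, |(b i).im|) (∑ i, |(b i).re|) with h | h
  · exact ⟨φ, hφ, by linarith⟩
  · exact ⟨χ, hχ, by linarith⟩

end Complex

theorem one_bit_quarter_of_continuous_sup_general (N : ℕ) (b : Fin N → ℂ) :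
    ∃ φ : Fin N → ℂ, (∀ n, φ n = 1 ∨ φ n = -1) ∧
      (1 / 4) * sSup {x : ℝ | ∃ ψ : Fin N → ℂ,
          (∀ n, ‖ψ n‖ = 1) ∧ x = ‖∑ n, b n * ψ n‖ ^ 2}
        ≤ ‖∑ n, b n * φ n‖ ^ 2 := by
  obtain ⟨φ, hφ, hle⟩ := Complex.exists_sign_sum_norm_le_two_mul_norm b
  refine ⟨φ, hφ, ?_⟩
  have hsup : sSup {x : ℝ | ∃ ψ : Fin N → ℂ,
      (∀ n, ‖ψ n‖ = 1) ∧ x = ‖∑ n, b n * ψ n‖ ^ 2} ≤ (∑ n, ‖b n‖) ^ 2 := by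
    refine Real.sSup_le ?_ (by positivity)
    rintro x ⟨ψ, hψ, rfl⟩
    gcongr
    exact Complex.norm_sum_mul_le_sum_norm_of_norm_eq_one b ψ hψ
  calc (1 / 4) * sSup _ ≤ (1 / 4) * (∑ n, ‖b n‖) ^ 2 := by gcongr
    _ ≤ ‖∑ n, b n * φ n‖ ^ 2 := by nlinarith [pow_le_pow_left₀ (by positivity) hle 2]

/-- A 1-bit (`±1`) configuration attains at least a quarter of the squared maximum
achievable with continuous unit-modulus phase shifts. -/
theorem one_bit_quarter_of_continuous_sup (N : ℕ) (hN : 0 < N) (b : Fin N → ℂ) :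
    ∃ φ : Fin N → ℂ, (∀ n, φ n = 1 ∨ φ n = -1) ∧
      (1 / 4) * sSup {x : ℝ | ∃ ψ : Fin N → ℂ,
          (∀ n, ‖ψ n‖ = 1) ∧ x = ‖∑ n, b n * ψ n‖ ^ 2}
        ≤ ‖∑ n, b n * φ n‖ ^ 2 :=
  one_bit_quarter_of_continuous_sup_general N b
end

section
/- Let N be a positive integer and b ∈ ℂ^N with |b_n| = 1 for all n. Then there exists φ ∈ {−1,1}^N such that |Σ_{n=1}^N b_n φ_n|² ≥ N²/4. -/
/-!
Choosing `φ n` as the sign of `Re b_n` turns `Re (∑ b_n φ_n)` into `∑ |Re b_n|`, and likewise for the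
imaginary parts. Since `1 = |b_n| ≤ |Re b_n| + |Im b_n|`, one of these two sums is at least `N / 2`,
and the modulus of the aligned sum dominates it.
-/

section SignAlignment

variable {ι R : Type*} [Fintype ι]

theorem exists_sign_sum_abs_le_norm_sum_mul [SeminormedRing R] (f : R →+ ℝ)
    (hf : ∀ z, |f z| ≤ ‖z‖) (b : ι → R) :
    ∃ φ : ι → R, (∀ n, φ n = 1 ∨ φ n = -1) ∧ ∑ n, |f (b n)| ≤ ‖∑ n, b n * φ n‖ := by
  classical
  set φ : ι → R := fun n => if 0 ≤ f (b n) then 1 else -1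
  have aligned : ∀ n, f (b n * φ n) = |f (b n)| := fun n => by
    by_cases h : 0 ≤ f (b n)
    · simp [φ, h, abs_of_nonneg h]
    · simp [φ, h, abs_of_neg (not_le.mp h)]
  refine ⟨φ, fun n => by by_cases h : 0 ≤ f (b n) <;> simp [φ, h], ?_⟩
  calc ∑ n, |f (b n)| = f (∑ n, b n * φ n) := by simp only [map_sum, aligned]
    _ ≤ |f (∑ n, b n * φ n)| := le_abs_self _
    _ ≤ ‖∑ n, b n * φ n‖ := hf _

theorem Complex.exists_sign_sum_norm_div_two_le_norm_sum_mul (b : ι → ℂ) :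
    ∃ φ : ι → ℂ, (∀ n, φ n = 1 ∨ φ n = -1) ∧ (∑ n, ‖b n‖) / 2 ≤ ‖∑ n, b n * φ n‖ := by
  obtain ⟨φre, hφre, hre⟩ :=
    exists_sign_sum_abs_le_norm_sum_mul reAddGroupHom abs_re_le_norm b
  obtain ⟨φim, hφim, him⟩ :=
    exists_sign_sum_abs_le_norm_sum_mul imAddGroupHom abs_im_le_norm b
  have split : ∑ n, ‖b n‖ ≤ ∑ n, |(b n).re| + ∑ n, |(b n).im| := by
    rw [← Finset.sum_add_distrib]
    exact Finset.sum_le_sum fun n _ => norm_le_abs_re_add_abs_im (b n)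
  by_cases h : (∑ n, ‖b n‖) / 2 ≤ ∑ n, |(b n).re|
  · exact ⟨φre, hφre, h.trans hre⟩
  · refine ⟨φim, hφim, ?_⟩
    simp only [coe_reAddGroupHom, coe_imAddGroupHom] at hre him
    linarith

end SignAlignment

theorem sign_alignment_unit_modulus_general (N : ℕ) (b : Fin N → ℂ)
    (hb : ∀ n, ‖b n‖ = 1) :
    ∃ φ : Fin N → ℂ, (∀ n, φ n = 1 ∨ φ n = -1) ∧
      (N : ℝ) ^ 2 / 4 ≤ ‖∑ n, b n * φ n‖ ^ 2 := by
  obtain ⟨φ, hφ, hle⟩ := Complex.exists_sign_sum_norm_div_two_le_norm_sum_mul b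
  have hsum : ∑ n, ‖b n‖ = N := by simp [hb]
  refine ⟨φ, hφ, ?_⟩
  calc (N : ℝ) ^ 2 / 4 = ((N : ℝ) / 2) ^ 2 := by ring
    _ ≤ ‖∑ n, b n * φ n‖ ^ 2 := by gcongr; rwa [← hsum]

/-- For a unit-modulus vector `b ∈ ℂ^N`, a `±1` configuration achieves squared gain
at least `N² / 4`. -/
theorem sign_alignment_unit_modulus (N : ℕ) (hN : 0 < N) (b : Fin N → ℂ)
    (hb : ∀ n, ‖b n‖ = 1) :
    ∃ φ : Fin N → ℂ, (∀ n, φ n = 1 ∨ φ n = -1) ∧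
      (N : ℝ) ^ 2 / 4 ≤ ‖∑ n, b n * φ n‖ ^ 2 :=
  sign_alignment_unit_modulus_general N b hb
end

section
/- Let a_R ∈ ℂ^{N_R}, a_T ∈ ℂ^{N_T}, a^O, a^I ∈ ℂ^{N_S} be vectors all of whose entries have modulus 1. Then there exists φ ∈ {−1,1}^{N_S} such that, with Φ = diag(φ) and H̃ = a_R (a^O)^H Φ a^I a_T^H, the channel gain satisfies ‖H̃‖_F² ≥ (1/4) · N_R · N_T · N_S². -/
open Finset Matrix

/-! The gain factors as `N_R N_T |∑ₙ φₙ conj(aOₙ) aIₙ|²`. Taking `φₙ` to be the sign of the real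
part, or of the imaginary part, of `conj(aOₙ) aIₙ` makes the real, resp. imaginary, part of the
sum equal to `∑ₙ |re|`, resp. `∑ₙ |im|`; since `1 ≤ |re| + |im|` for a unit complex number, one of
the two is at least `N_S / 2`. -/

section SignChoice

variable {ι : Type*} [Fintype ι]

theorem exists_sign_apply_sum_eq_sum_abs (f : ℂ →ₗ[ℝ] ℝ) (z : ι → ℂ) :
    ∃ φ : ι → ℂ, (∀ n, φ n = 1 ∨ φ n = -1) ∧ f (∑ n, φ n * z n) = ∑ n, |f (z n)| := by
  refine ⟨fun n => if 0 ≤ f (z n) then 1 else -1, fun n => by dsimp only; split_ifs <;> simp, ?_⟩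
  rw [map_sum]
  refine sum_congr rfl fun n _ => ?_
  dsimp only
  split_ifs with h
  · simp [abs_of_nonneg h]
  · simp [abs_of_neg (not_le.mp h)]

theorem exists_sign_sum_norm_le_two_mul_norm_sum (z : ι → ℂ) :
    ∃ φ : ι → ℂ, (∀ n, φ n = 1 ∨ φ n = -1) ∧ ∑ n, ‖z n‖ ≤ 2 * ‖∑ n, φ n * z n‖ := by
  obtain ⟨φre, hφre, hre⟩ := exists_sign_apply_sum_eq_sum_abs Complex.reLm z
  obtain ⟨φim, hφim, him⟩ := exists_sign_apply_sum_eq_sum_abs Complex.imLm z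
  simp only [Complex.reLm_coe, Complex.imLm_coe] at hre him
  have hsplit : ∑ n, ‖z n‖ ≤ ∑ n, |(z n).re| + ∑ n, |(z n).im| := by
    rw [← sum_add_distrib]
    exact sum_le_sum fun n _ => Complex.norm_le_abs_re_add_abs_im _
  have hle_re := (le_abs_self _).trans (Complex.abs_re_le_norm (∑ n, φre n * z n))
  have hle_im := (le_abs_self _).trans (Complex.abs_im_le_norm (∑ n, φim n * z n))
  rcases le_total (∑ n, |(z n).im|) (∑ n, |(z n).re|) with h | h
  · exact ⟨φre, hφre, by linarith⟩
  · exact ⟨φim, hφim, by linarith⟩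

end SignChoice

theorem dotProduct_star_diagonal_mulVec {R ι : Type*} [CommSemiring R] [StarRing R]
    [Fintype ι] [DecidableEq ι] (φ a b : ι → R) :
    star a ⬝ᵥ diagonal φ *ᵥ b = ∑ n, φ n * (star (a n) * b n) := by
  simp only [dotProduct, mulVec_diagonal, Pi.star_apply]
  exact sum_congr rfl fun n _ => by ring

theorem sum_sum_norm_smul_vecMulVec_sq {𝕜 m n : Type*} [NormedDivisionRing 𝕜]
    [Fintype m] [Fintype n] (c : 𝕜) (u : m → 𝕜) (v : n → 𝕜) :
    ∑ i, ∑ j, ‖(c • vecMulVec u v) i j‖ ^ 2 =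
      ‖c‖ ^ 2 * (∑ i, ‖u i‖ ^ 2) * ∑ j, ‖v j‖ ^ 2 := by
  simp only [Matrix.smul_apply, vecMulVec_apply, smul_eq_mul, norm_mul, mul_pow]
  simp_rw [mul_assoc, sum_mul_sum, mul_sum]

/-- Pure-LoS channel gain with a 1-bit RIS: if all steering vectors have unit-modulus
entries, some `±1` configuration `φ` yields `‖H̃‖_F² ≥ (1/4) N_R N_T N_S²`. -/
theorem los_one_bit_channel_gain (N_R N_T N_S : ℕ)
    (aR : Fin N_R → ℂ) (aT : Fin N_T → ℂ) (aO aI : Fin N_S → ℂ)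
    (haR : ∀ i, ‖aR i‖ = 1) (haT : ∀ j, ‖aT j‖ = 1)
    (haO : ∀ n, ‖aO n‖ = 1) (haI : ∀ n, ‖aI n‖ = 1) :
    ∃ φ : Fin N_S → ℂ, (∀ n, φ n = 1 ∨ φ n = -1) ∧
      (1 / 4 : ℝ) * N_R * N_T * (N_S : ℝ) ^ 2 ≤
        ∑ i, ∑ j, ‖
          (((star aO ⬝ᵥ (Matrix.diagonal φ).mulVec aI) •
            Matrix.vecMulVec aR (star aT)) i j)‖ ^ 2 := by
  obtain ⟨φ, hφ, hgain⟩ :=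
    exists_sign_sum_norm_le_two_mul_norm_sum fun n => star (aO n) * aI n
  refine ⟨φ, hφ, ?_⟩
  have hNS : (N_S : ℝ) ≤ 2 * ‖∑ n, φ n * (star (aO n) * aI n)‖ := by
    simpa [haO, haI] using hgain
  rw [sum_sum_norm_smul_vecMulVec_sq, dotProduct_star_diagonal_mulVec]
  simp only [Pi.star_apply, norm_star, haR, haT, one_pow, sum_const, card_univ,
    Fintype.card_fin, nsmul_eq_mul, mul_one]
  have hNS_sq : (N_S : ℝ) ^ 2 ≤ 4 * ‖∑ n, φ n * (star (aO n) * aI n)‖ ^ 2 := by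
    nlinarith [Nat.cast_nonneg (α := ℝ) N_S]
  have hNRT : (0 : ℝ) ≤ N_R * N_T := by positivity
  nlinarith
end
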